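/- Let q: [0, λ₁] → ℝ≥0 satisfy α·q(λ) ≤ C' and λ·q(λ) ≤ C'' for all λ ∈ [0, λ₁] (for fixed α > 0), and Σ as above be non-increasing, right-continuous, vanishing for t > λ₁, with ∫₀^{λ₁} Σ(t) dt < ∞. Then −∫₀^∞ t²·q(t)⁴ dΣ(t) ≤ 2·(max{C',C''})⁴·(1/α³)·∫₀^α Σ(t) dt. -/

import Mathlib

open MeasureTheory Set

/-!
Both hypotheses on `q` combine into `t² q(t)⁴ ≤ (M/α)⁴ min(t, α)²` with `M = max C' C''`. By the
layer-cake formula, `∫ min(t, α)² dμ = ∫₀^α 2s μ(s, ∞) ds`, and `μ(s, ∞) ≤ Sig(s)` since `μ` is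
the Stieltjes measure of `-Sig` and carries no mass beyond `λ₁`. Bounding `2s ≤ 2α` gives the
factor `2α · α⁻⁴ = 2/α³`.
-/

lemma integral_le_of_lintegral_enorm_le_ofReal {X : Type*} [MeasurableSpace X] {μ : Measure X}
    {f : X → ℝ} {c : ℝ} (hc : 0 ≤ c) (h : ∫⁻ x, ‖f x‖ₑ ∂μ ≤ ENNReal.ofReal c) :
    ∫ x, f x ∂μ ≤ c := by
  refine (le_abs_self _).trans ?_
  rw [← Real.norm_eq_abs, ← ENNReal.ofReal_le_ofReal_iff hc, ofReal_norm]
  exact (enorm_integral_le_lintegral_enorm f).trans h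

lemma sq_mul_pow_four_le {t α q M : ℝ} (ht : 0 ≤ t) (hα : 0 < α) (hq : 0 ≤ q)
    (hαq : α * q ≤ M) (htq : t * q ≤ M) :
    t ^ 2 * q ^ 4 ≤ (M / α) ^ 4 * min t α ^ 2 := by
  have hq_le : q ≤ M / α := by rw [le_div_iff₀ hα]; linarith
  have htq_le : t * q ≤ M / α * min t α := by
    rcases le_total t α with h | h
    · rw [min_eq_left h, mul_comm t]
      exact mul_le_mul_of_nonneg_right hq_le ht
    · rwa [min_eq_right h, div_mul_cancel₀ M hα.ne']
  calc t ^ 2 * q ^ 4 = (t * q) ^ 2 * q ^ 2 := by ring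
    _ ≤ (M / α * min t α) ^ 2 * (M / α) ^ 2 := by gcongr
    _ = (M / α) ^ 4 * min t α ^ 2 := by ring

lemma lintegral_ofReal_min_sq {μ : Measure ℝ} (hμ : μ (Iic 0) = 0) {α : ℝ} (hα : 0 ≤ α) :
    ∫⁻ t, ENNReal.ofReal (min t α ^ 2) ∂μ =
      ∫⁻ s in Ioo 0 α, μ (Ioi s) * ENNReal.ofReal (2 * s) := by
  have hpos : ∀ᵐ t ∂μ, 0 < t := measure_eq_zero_iff_ae_notMem.mp hμ |>.mono fun t ht => by
    simpa using ht
  have hsq : ∀ x : ℝ, ∫ s in (0:ℝ)..x, 2 * s = x ^ 2 := fun x => by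
    rw [intervalIntegral.integral_const_mul, integral_id]; ring
  have hlayer := lintegral_comp_eq_lintegral_meas_lt_mul (g := fun s => 2 * s) μ
    (hpos.mono fun t ht => le_min ht.le hα) (measurable_id.min measurable_const).aemeasurable
    (fun _ _ => (continuous_const.mul continuous_id).intervalIntegrable _ _)
    ((ae_restrict_iff' measurableSet_Ioi).mpr (.of_forall fun s (hs : 0 < s) => by positivity))
  simp only [hsq] at hlayer
  have htail : ∀ s, μ {t | s < min t α} * ENNReal.ofReal (2 * s) =
      (Iio α).indicator (fun s => μ (Ioi s) * ENNReal.ofReal (2 * s)) s := by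
    intro s
    by_cases hs : s < α
    · simp [hs, Ioi]
    · simp [hs]
  rw [hlayer, lintegral_congr htail, lintegral_indicator measurableSet_Iio,
    Measure.restrict_restrict measurableSet_Iio, Iio_inter_Ioi]

lemma measure_Ioi_le_ofReal {μ : Measure ℝ} {Sig : ℝ → ℝ} {b s : ℝ}
    (hμ : ∀ s t : ℝ, 0 < s → s ≤ t → μ (Ioc s t) = ENNReal.ofReal (Sig s - Sig t))
    (hμb : μ (Ioi b) = 0) (hSig : ∀ t > 0, 0 ≤ Sig t) (hs : 0 < s) :
    μ (Ioi s) ≤ ENNReal.ofReal (Sig s) := by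
  rcases le_or_gt s b with h | h
  · calc μ (Ioi s) ≤ μ (Ioc s b) + μ (Ioi b) := by
          rw [← Ioc_union_Ioi_eq_Ioi h]; exact measure_union_le _ _
      _ = ENNReal.ofReal (Sig s - Sig b) := by rw [hμ s b hs h, hμb, add_zero]
      _ ≤ ENNReal.ofReal (Sig s) := by
          gcongr; linarith [hSig b (hs.trans_le h)]
  · calc μ (Ioi s) ≤ μ (Ioi b) := measure_mono (Ioi_subset_Ioi h.le)
      _ = 0 := hμb
      _ ≤ _ := zero_le

lemma lintegral_ofReal_min_sq_le {μ : Measure ℝ} {Sig : ℝ → ℝ} {α : ℝ} (hμ : μ (Iic 0) = 0)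
    (hα : 0 ≤ α) (hIoi : ∀ s > 0, μ (Ioi s) ≤ ENNReal.ofReal (Sig s))
    (hSig : ∀ s > 0, 0 ≤ Sig s) (hint : IntegrableOn Sig (Ioc 0 α)) :
    ∫⁻ t, ENNReal.ofReal (min t α ^ 2) ∂μ ≤ ENNReal.ofReal (2 * α * ∫ s in 0..α, Sig s) := by
  rw [lintegral_ofReal_min_sq hμ hα, intervalIntegral.integral_of_le hα, ← integral_const_mul,
    ofReal_integral_eq_lintegral_ofReal (hint.const_mul _)
      ((ae_restrict_iff' measurableSet_Ioc).mpr (.of_forall fun s hs => by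
        have := hSig s hs.1; positivity))]
  calc ∫⁻ s in Ioo 0 α, μ (Ioi s) * ENNReal.ofReal (2 * s)
      ≤ ∫⁻ s in Ioc 0 α, μ (Ioi s) * ENNReal.ofReal (2 * s) :=
        lintegral_mono_set Ioo_subset_Ioc_self
    _ ≤ ∫⁻ s in Ioc 0 α, ENNReal.ofReal (2 * α * Sig s) := by
        refine setLIntegral_mono' measurableSet_Ioc fun s hs => ?_
        rw [mul_comm (2 * α), ENNReal.ofReal_mul (hSig s hs.1)]
        exact mul_le_mul' (hIoi s hs.1) (ENNReal.ofReal_le_ofReal (by linarith [hs.2]))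

theorem stmt_16_general (lam1 α C' C'' : ℝ) (hα : 0 < α)
    (q : ℝ → ℝ) (hq0 : ∀ l ∈ Set.Icc (0:ℝ) lam1, 0 ≤ q l)
    (hq1 : ∀ l ∈ Set.Icc (0:ℝ) lam1, α * q l ≤ C')
    (hq2 : ∀ l ∈ Set.Icc (0:ℝ) lam1, l * q l ≤ C'')
    (Sig : ℝ → ℝ) (hSignonneg : ∀ t > (0:ℝ), 0 ≤ Sig t)
    (hSig0 : ∀ t > lam1, Sig t = 0)
    (hSigint : IntegrableOn Sig (Set.Ioc 0 lam1))
    (μ : Measure ℝ)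
    (hμ : ∀ s t : ℝ, 0 < s → s ≤ t → μ (Set.Ioc s t) = ENNReal.ofReal (Sig s - Sig t))
    (hμsupp : μ (Set.Iic 0) = 0 ∧ μ (Set.Ioi lam1) = 0) :
    ∫ t, t ^ 2 * (q t) ^ 4 ∂μ ≤
      2 * (max C' C'') ^ 4 * (1 / α ^ 3) * ∫ t in (0:ℝ)..α, Sig t := by
  obtain ⟨hμ0, hμlam⟩ := hμsupp
  set M := max C' C''
  have hsupp : ∀ᵐ t ∂μ, t ∈ Ioc 0 lam1 :=
    mem_ae_iff (s := Ioc 0 lam1) |>.mpr (by rw [compl_Ioc]; exact measure_union_null hμ0 hμlam)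
  have hSigα : IntegrableOn Sig (Ioc 0 α) :=
    (hSigint.union (integrableOn_zero.congr_fun (fun t ht => (hSig0 t ht.1).symm)
      measurableSet_Ioc)).mono_set Ioc_subset_Ioc_union_Ioc
  have hI : 0 ≤ ∫ t in (0:ℝ)..α, Sig t := by
    rw [intervalIntegral.integral_of_le hα.le]
    exact setIntegral_nonneg measurableSet_Ioc fun t ht => hSignonneg t ht.1
  have hpoint : ∀ᵐ t ∂μ,
      ‖t ^ 2 * q t ^ 4‖ₑ ≤ ENNReal.ofReal ((M / α) ^ 4) * ENNReal.ofReal (min t α ^ 2) := by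
    filter_upwards [hsupp] with t ht
    have ht' : t ∈ Icc 0 lam1 := Ioc_subset_Icc_self ht
    rw [Real.enorm_of_nonneg (by positivity), ← ENNReal.ofReal_mul (by positivity)]
    exact ENNReal.ofReal_le_ofReal <| sq_mul_pow_four_le ht.1.le hα (hq0 t ht')
      ((hq1 t ht').trans (le_max_left _ _)) ((hq2 t ht').trans (le_max_right _ _))
  refine integral_le_of_lintegral_enorm_le_ofReal (by positivity) ?_
  calc ∫⁻ t, ‖t ^ 2 * q t ^ 4‖ₑ ∂μ
      ≤ ∫⁻ t, ENNReal.ofReal ((M / α) ^ 4) * ENNReal.ofReal (min t α ^ 2) ∂μ :=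
        lintegral_mono_ae hpoint
    _ = ENNReal.ofReal ((M / α) ^ 4) * ∫⁻ t, ENNReal.ofReal (min t α ^ 2) ∂μ :=
        lintegral_const_mul _ ((measurable_id.min measurable_const).pow_const 2).ennreal_ofReal
    _ ≤ ENNReal.ofReal ((M / α) ^ 4) * ENNReal.ofReal (2 * α * ∫ t in (0:ℝ)..α, Sig t) := by
        gcongr
        exact lintegral_ofReal_min_sq_le hμ0 hα.le
          (fun s hs => measure_Ioi_le_ofReal hμ hμlam hSignonneg hs) hSignonneg hSigα
    _ = ENNReal.ofReal (2 * M ^ 4 * (1 / α ^ 3) * ∫ t in (0:ℝ)..α, Sig t) := by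
        rw [← ENNReal.ofReal_mul (by positivity)]
        congr 1
        field_simp

/-- Second integration-by-parts estimate from the Comparison Lemma:
`-∫ t² q(t)⁴ dSig(t) ≤ 2 (max{C',C''})⁴ (1/α³) ∫₀^α Sig(t) dt`. -/
theorem stmt_16 (lam1 α C' C'' : ℝ) (hlam1 : 0 < lam1) (hα : 0 < α)
    (hC' : 0 < C') (hC'' : 0 < C'')
    (q : ℝ → ℝ) (hq0 : ∀ l ∈ Set.Icc (0:ℝ) lam1, 0 ≤ q l)
    (hq1 : ∀ l ∈ Set.Icc (0:ℝ) lam1, α * q l ≤ C')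
    (hq2 : ∀ l ∈ Set.Icc (0:ℝ) lam1, l * q l ≤ C'')
    (Sig : ℝ → ℝ) (hSignonneg : ∀ t > (0:ℝ), 0 ≤ Sig t)
    (hSiganti : AntitoneOn Sig (Set.Ioi 0))
    (hSigrc : ∀ t > (0:ℝ), ContinuousWithinAt Sig (Set.Ici t) t)
    (hSig0 : ∀ t > lam1, Sig t = 0)
    (hSigint : IntegrableOn Sig (Set.Ioc 0 lam1))
    (μ : Measure ℝ)
    (hμ : ∀ s t : ℝ, 0 < s → s ≤ t → μ (Set.Ioc s t) = ENNReal.ofReal (Sig s - Sig t))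
    (hμsupp : μ (Set.Iic 0) = 0 ∧ μ (Set.Ioi lam1) = 0) :
    ∫ t, t ^ 2 * (q t) ^ 4 ∂μ ≤
      2 * (max C' C'') ^ 4 * (1 / α ^ 3) * ∫ t in (0:ℝ)..α, Sig t :=
  stmt_16_general lam1 α C' C'' hα q hq0 hq1 hq2 Sig hSignonneg hSig0 hSigint μ hμ hμsupp
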